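/- arXiv:2011.07695 — 3 statements merged into one kernel-verified Lean document; each statement's English description precedes it below -/
import Mathlib

section
/- Let 0 ≤ k ≤ n be integers and R a commutative ring. The map δ on the free R-module with basis {n;k}, defined by δ(S) := Σ_r (−1)^{d_r(S)} · 2 · S_r where the sum runs over all 1 ≤ r ≤ k with s_{r+1} − s_r > 1 (convention s_{k+1} := n+1) and k − s_r odd, satisfies δ ∘ δ = 0; since d(S_r) = d(S) + 1 for each such r, δ raises the grading by d by exactly one, so these data form a cochain complex of R-modules (the Schubert cochain complex over R). -/
/-!
Write `δ S = ∑ᵣ c_r(S) · S_r`, with `c_r(S) = ±2` for the admissible indices `r` and `0` otherwise,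
so that the coefficient of `U` in `δ (δ S)` is a sum over ordered pairs `(r, r')` with
`U = (S_r)_{r'}`. Diagonal pairs vanish: moving `s_r` to `s_r + 1` flips the parity of `k − s_r`.
For `r ≠ r'` the two moves commute and each stays admissible after the other (the parity condition
forces `s_{r'} + 2 ≤ s_r` when `r' + 1 = r`, so the gap at `r'` survives), while
`d_{r'}(S_r) = d_{r'}(S) + [r' ≤ r]` makes the two signs opposite; so the pairs `(r, r')` and
`(r', r)` cancel.
-/

open scoped BigOperators Classical

/-- `{n;k}`: the set of subsets of `{1,…,n}` of cardinality `k`. -/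
def Sset (n k : ℕ) : Finset (Finset ℕ) := (Finset.Icc 1 n).powersetCard k

/-- `elt S r` is `s_r`, the `r`-th smallest element of `S` (1-indexed); junk value `0` out of range. -/
def elt (S : Finset ℕ) (r : ℕ) : ℕ := (S.sort (· ≤ ·)).getD (r - 1) 0

/-- `s_{r+1}`, with the convention `s_{k+1} = n+1`. -/
def nxt (n : ℕ) (S : Finset ℕ) (r : ℕ) : ℕ := if r = S.card then n + 1 else elt S (r + 1)

/-- `s_{r-1}`, with the convention `s_0 = 0`. -/
def prv (S : Finset ℕ) (r : ℕ) : ℕ := if r = 1 then 0 else elt S (r - 1)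

/-- `d_r(S) = Σ_{r ≤ i ≤ k} (s_i − i)`. -/
def dr (S : Finset ℕ) (r : ℕ) : ℕ := ∑ i ∈ Finset.Icc r S.card, (elt S i - i)

/-- `d(S) = d_1(S)`. -/
def dS (S : Finset ℕ) : ℕ := dr S 1

/-- `S_r`: the set obtained from `S` by replacing `s_r` with `s_r + 1`. -/
def Sr (S : Finset ℕ) (r : ℕ) : Finset ℕ := insert (elt S r + 1) (S.erase (elt S r))

/-- The coefficient of `T` in `δ(S)`. -/
noncomputable def schubCoeff (n k : ℕ) (R : Type*) [CommRing R] (T S : Finset ℕ) : R :=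
  ∑ r ∈ Finset.Icc 1 k,
    if 1 < nxt n S r - elt S r ∧ Odd ((k : ℤ) - elt S r) ∧ T = Sr S r
    then (-1 : R) ^ dr S r * 2 else 0

/-- The matrix of the Schubert differential. -/
noncomputable def schubD (n k : ℕ) (R : Type*) [CommRing R] :
    Matrix ↥(Sset n k) ↥(Sset n k) R :=
  fun T S => schubCoeff n k R T.1 S.1

/-- The Schubert differential `δ` on the free `R`-module with basis `{n;k}`. -/
noncomputable def schubDelta (n k : ℕ) (R : Type*) [CommRing R] :
    (↥(Sset n k) → R) →ₗ[R] (↥(Sset n k) → R) :=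
  (schubD n k R).mulVecLin

open Finset

open List in
theorem List.toFinset_set_of_nodup {α : Type*} [DecidableEq α] {l : List α} (hl : l.Nodup)
    {i : ℕ} (hi : i < l.length) (a : α) :
    (l.set i a).toFinset = insert a (l.toFinset.erase l[i]) := by
  set x := l[i]
  have hsplit : l = l.take i ++ x :: l.drop (i + 1) := by
    rw [getElem_cons_drop, take_append_drop]
  have hnotin : x ∉ (l.take i).toFinset ∪ (l.drop (i + 1)).toFinset := by
    have hl' := hsplit ▸ hl
    simp only [nodup_append, nodup_cons] at hl'
    simp only [Finset.mem_union, mem_toFinset, not_or]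
    exact ⟨fun h => hl'.2.2 x h x mem_cons_self rfl, hl'.2.1.1⟩
  have hfin : l.toFinset = (l.take i ++ x :: l.drop (i + 1)).toFinset := congrArg _ hsplit
  rw [set_eq_take_append_cons_drop, if_pos hi, hfin]
  simp only [toFinset_append, toFinset_cons, Finset.union_insert, Finset.erase_insert hnotin]

theorem Finset.sum_sum_eq_zero_of_antisymm {ι M : Type*} [AddCommMonoid M] (s : Finset ι)
    (f : ι → ι → M) (hdiag : ∀ i ∈ s, f i i = 0)
    (hanti : ∀ i ∈ s, ∀ j ∈ s, i ≠ j → f i j + f j i = 0) :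
    ∑ i ∈ s, ∑ j ∈ s, f i j = 0 := by
  rw [← sum_product']
  refine sum_involution (fun p _ => p.swap) ?_ ?_
    (fun p hp => mem_product.mpr (mem_product.mp hp).symm) (fun p _ => p.swap_swap)
  · rintro ⟨i, j⟩ hp
    obtain ⟨hi, hj⟩ := mem_product.mp hp
    rcases eq_or_ne i j with rfl | hne
    · simp [hdiag i hi]
    · exact hanti i hi j hj hne
  · rintro ⟨i, j⟩ hp hf hswap
    cases Prod.ext_iff.mp hswap |>.1
    exact hf (hdiag i (mem_product.mp hp).1)

section Enumeration

variable {n k : ℕ} {S : Finset ℕ} {i j r : ℕ}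

lemma mem_Sset_iff : S ∈ Sset n k ↔ S ⊆ Icc 1 n ∧ S.card = k := mem_powersetCard

lemma elt_eq_getElem (hi : 1 ≤ i) (hiS : i ≤ S.card) :
    elt S i = (S.sort (· ≤ ·))[i - 1]'(by rw [length_sort]; omega) :=
  List.getD_eq_getElem _ _ _

lemma elt_mem (hi : 1 ≤ i) (hiS : i ≤ S.card) : elt S i ∈ S := by
  rw [elt_eq_getElem hi hiS, ← mem_sort (· ≤ ·)]
  exact List.getElem_mem _

lemma elt_lt_elt (hi : 1 ≤ i) (hij : i < j) (hjS : j ≤ S.card) : elt S i < elt S j := by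
  rw [elt_eq_getElem hi (by omega), elt_eq_getElem (by omega) hjS]
  exact List.pairwise_iff_getElem.mp (sortedLT_sort S).pairwise _ _ _ _ (by omega)

lemma elt_mem_Icc (hS : S ∈ Sset n k) (hi : 1 ≤ i) (hiS : i ≤ S.card) : elt S i ∈ Icc 1 n :=
  (mem_Sset_iff.mp hS).1 (elt_mem hi hiS)

lemma le_elt (hS : S ∈ Sset n k) (hi : 1 ≤ i) (hiS : i ≤ S.card) : i ≤ elt S i := by
  induction i with
  | zero => omega
  | succ m ih =>
    rcases Nat.eq_zero_or_pos m with rfl | hm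
    · exact (mem_Icc.mp (elt_mem_Icc hS hi hiS)).1
    · have := ih hm (by omega)
      have := elt_lt_elt hm (Nat.lt_add_one m) hiS
      omega

lemma nxt_le (hS : S ∈ Sset n k) (hr : 1 ≤ r) (hrS : r ≤ S.card) : nxt n S r ≤ n + 1 := by
  unfold nxt
  split_ifs with h
  · rfl
  · have := mem_Icc.mp (elt_mem_Icc hS (by omega : 1 ≤ r + 1) (by omega)); omega

lemma getElem_sort_eq_elt {a : ℕ} (ha : a < (S.sort (· ≤ ·)).length) :
    (S.sort (· ≤ ·))[a] = elt S (a + 1) := by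
  rw [length_sort] at ha
  rw [elt_eq_getElem (by omega) ha]
  rfl

end Enumeration

section Move

variable {n k : ℕ} {S : Finset ℕ} {r j : ℕ}

lemma pairwise_set_elt_add_one (hr : 1 ≤ r) (hrS : r ≤ S.card)
    (hgap : 1 < nxt n S r - elt S r) :
    ((S.sort (· ≤ ·)).set (r - 1) (elt S r + 1)).Pairwise (· < ·) := by
  rw [List.pairwise_iff_getElem]
  intro a b ha hb hab
  simp only [List.length_set, length_sort] at ha hb
  simp only [List.getElem_set, getElem_sort_eq_elt]
  split_ifs with hra hrb hrb
  · omega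
  · rcases Nat.lt_or_ge (b + 1) (r + 1) with h | h
    · omega
    · have hnxt : nxt n S r = elt S (r + 1) := if_neg (by omega)
      rcases h.eq_or_lt with h | h
      · rw [← h]; omega
      · have := elt_lt_elt (by omega) h (by omega : b + 1 ≤ S.card); omega
  · have := elt_lt_elt (S := S) (by omega) (by omega : a + 1 < r) hrS; omega
  · exact elt_lt_elt (by omega) (by omega) (by omega)

lemma sort_Sr (hr : 1 ≤ r) (hrS : r ≤ S.card) (hgap : 1 < nxt n S r - elt S r) :
    (Sr S r).sort (· ≤ ·) = (S.sort (· ≤ ·)).set (r - 1) (elt S r + 1) := by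
  have hpw := pairwise_set_elt_add_one hr hrS hgap
  have hset : ((S.sort (· ≤ ·)).set (r - 1) (elt S r + 1)).toFinset = Sr S r := by
    rw [List.toFinset_set_of_nodup (sort_nodup _ _) (by rw [length_sort]; omega), sort_toFinset,
      ← elt_eq_getElem hr hrS, Sr]
  rw [← hset, List.toFinset_sort _ hpw.nodup]
  exact hpw.imp le_of_lt

lemma card_Sr (hr : 1 ≤ r) (hrS : r ≤ S.card) (hgap : 1 < nxt n S r - elt S r) :
    (Sr S r).card = S.card := by
  simpa using congrArg List.length (sort_Sr hr hrS hgap)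

lemma elt_Sr (hr : 1 ≤ r) (hrS : r ≤ S.card) (hgap : 1 < nxt n S r - elt S r)
    (hj : 1 ≤ j) (hjS : j ≤ S.card) :
    elt (Sr S r) j = if j = r then elt S r + 1 else elt S j := by
  rw [elt_eq_getElem hj (by rwa [card_Sr hr hrS hgap])]
  simp only [sort_Sr hr hrS hgap, List.getElem_set]
  by_cases h : j = r
  · rw [if_pos (by omega), if_pos h]
  · rw [if_neg (by omega), if_neg h, elt_eq_getElem hj hjS]

lemma nxt_Sr (hr : 1 ≤ r) (hrS : r ≤ S.card) (hgap : 1 < nxt n S r - elt S r)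
    (hj : 1 ≤ j) (hjS : j ≤ S.card) :
    nxt n (Sr S r) j = if j + 1 = r then elt S r + 1 else nxt n S j := by
  unfold nxt
  rw [card_Sr hr hrS hgap]
  by_cases h : j = S.card
  · rw [if_pos h, if_neg (by omega), if_pos h]
  · rw [if_neg h, if_neg h, elt_Sr hr hrS hgap (by omega) (by omega)]

lemma mem_Sset_Sr (hS : S ∈ Sset n k) (hr : 1 ≤ r) (hrS : r ≤ S.card)
    (hgap : 1 < nxt n S r - elt S r) : Sr S r ∈ Sset n k := by
  obtain ⟨hsub, hcard⟩ := mem_Sset_iff.mp hS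
  refine mem_Sset_iff.mpr ⟨fun x hx => ?_, (card_Sr hr hrS hgap).trans hcard⟩
  rcases mem_insert.mp hx with rfl | hx
  · have := mem_Icc.mp (elt_mem_Icc hS hr hrS)
    have := nxt_le hS hr hrS
    exact mem_Icc.mpr ⟨by omega, by omega⟩
  · exact hsub (mem_of_mem_erase hx)

lemma dr_Sr (hS : S ∈ Sset n k) (hr : 1 ≤ r) (hrS : r ≤ S.card)
    (hgap : 1 < nxt n S r - elt S r) (hj : 1 ≤ j) :
    dr (Sr S r) j = dr S j + if j ≤ r then 1 else 0 := by
  have hterm : ∀ i ∈ Icc j S.card,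
      elt (Sr S r) i - i = (elt S i - i) + if i = r then 1 else 0 := by
    intro i hi
    rw [mem_Icc] at hi
    rw [elt_Sr hr hrS hgap (by omega) hi.2]
    split_ifs with h
    · subst h
      have := le_elt hS hr hrS
      omega
    · rfl
  rw [dr, dr, card_Sr hr hrS hgap, sum_congr rfl hterm, sum_add_distrib, sum_ite_eq']
  simp only [mem_Icc, hrS, and_true]

end Move

lemma add_two_le_of_lt_of_odd_sub {k a b : ℕ} (hab : a < b) (ha : Odd ((k : ℤ) - a))
    (hb : Odd ((k : ℤ) - b)) : a + 2 ≤ b := by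
  obtain ⟨x, hx⟩ := ha
  obtain ⟨y, hy⟩ := hb
  omega

def Admissible (n k : ℕ) (S : Finset ℕ) (r : ℕ) : Prop :=
  1 < nxt n S r - elt S r ∧ Odd ((k : ℤ) - elt S r)

noncomputable def moveCoeff (n k : ℕ) (R : Type*) [CommRing R] (S : Finset ℕ) (r : ℕ) : R :=
  if Admissible n k S r then (-1) ^ dr S r * 2 else 0

section Admissible

variable {n k : ℕ} {S : Finset ℕ} {r r' : ℕ}

lemma not_admissible_Sr_self (hS : S ∈ Sset n k) (hr : r ∈ Icc 1 k)
    (h : Admissible n k S r) : ¬ Admissible n k (Sr S r) r := by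
  obtain ⟨hr1, hrk⟩ := mem_Icc.mp hr
  have hcard := (mem_Sset_iff.mp hS).2
  rintro ⟨-, hodd⟩
  rw [elt_Sr hr1 (by omega) h.1 hr1 (by omega), if_pos rfl] at hodd
  obtain ⟨x, hx⟩ := h.2
  obtain ⟨y, hy⟩ := hodd
  push_cast at hy
  omega

lemma admissible_Sr_iff (hS : S ∈ Sset n k) (hr : r ∈ Icc 1 k) (h : Admissible n k S r)
    (hr' : r' ∈ Icc 1 k) (hne : r' ≠ r) :
    Admissible n k (Sr S r) r' ↔ Admissible n k S r' := by
  obtain ⟨hr1, hrk⟩ := mem_Icc.mp hr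
  obtain ⟨hr1', hrk'⟩ := mem_Icc.mp hr'
  have hcard := (mem_Sset_iff.mp hS).2
  unfold Admissible
  rw [nxt_Sr hr1 (by omega) h.1 hr1' (by omega), elt_Sr hr1 (by omega) h.1 hr1' (by omega),
    if_neg hne]
  split_ifs with hadj
  · have hnxt : nxt n S r' = elt S r := by
      unfold nxt
      rw [if_neg (by omega), hadj]
    have hlt : elt S r' < elt S r := elt_lt_elt hr1' (by omega) (by omega)
    rw [hnxt]
    constructor <;> rintro ⟨-, hodd⟩ <;> refine ⟨?_, hodd⟩ <;>
      have := add_two_le_of_lt_of_odd_sub hlt hodd h.2 <;> omega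
  · rfl

lemma Sr_comm (hS : S ∈ Sset n k) (hr : r ∈ Icc 1 k) (h : Admissible n k S r)
    (hr' : r' ∈ Icc 1 k) (h' : Admissible n k S r') (hne : r ≠ r') :
    Sr (Sr S r) r' = Sr (Sr S r') r := by
  obtain ⟨hr1, hrk⟩ := mem_Icc.mp hr
  obtain ⟨hr1', hrk'⟩ := mem_Icc.mp hr'
  have hcard := (mem_Sset_iff.mp hS).2
  have hsort : ∀ {a b : ℕ}, a ∈ Icc 1 k → Admissible n k S a → b ∈ Icc 1 k →
      Admissible n k S b → a ≠ b → (Sr (Sr S a) b).sort (· ≤ ·) =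
        ((S.sort (· ≤ ·)).set (a - 1) (elt S a + 1)).set (b - 1) (elt S b + 1) := by
    intro a b ha hadm hb hbdm hab
    obtain ⟨ha1, hak⟩ := mem_Icc.mp ha
    obtain ⟨hb1, hbk⟩ := mem_Icc.mp hb
    have hgap := ((admissible_Sr_iff hS ha hadm hb hab.symm).mpr hbdm).1
    rw [sort_Sr hb1 (by rw [card_Sr ha1 (by omega) hadm.1]; omega) hgap,
      sort_Sr ha1 (by omega) hadm.1, elt_Sr ha1 (by omega) hadm.1 hb1 (by omega),
      if_neg hab.symm]
  have := congrArg List.toFinset <|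
    (hsort hr h hr' h' hne).trans <| (List.set_comm _ _ (by omega)).trans
      (hsort hr' h' hr h hne.symm).symm
  rwa [sort_toFinset, sort_toFinset] at this

variable {R : Type*} [CommRing R]

lemma moveCoeff_Sr_mul_moveCoeff (hS : S ∈ Sset n k) (hr : r ∈ Icc 1 k)
    (hr' : r' ∈ Icc 1 k) (hne : r' ≠ r) :
    moveCoeff n k R (Sr S r) r' * moveCoeff n k R S r =
      (if r' < r then -1 else 1) * (moveCoeff n k R S r' * moveCoeff n k R S r) := by
  by_cases h : Admissible n k S r
  · obtain ⟨hr1, hrk⟩ := mem_Icc.mp hr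
    have hcard := (mem_Sset_iff.mp hS).2
    simp only [moveCoeff, admissible_Sr_iff hS hr h hr' hne,
      dr_Sr hS hr1 (by omega) h.1 (mem_Icc.mp hr').1, pow_add]
    split_ifs <;> first | (exfalso; omega) | ring
  · simp [moveCoeff, h]

lemma schubCoeff_eq_sum (T S : Finset ℕ) :
    schubCoeff n k R T S = ∑ r ∈ Icc 1 k, if T = Sr S r then moveCoeff n k R S r else 0 := by
  refine sum_congr rfl fun r _ => ?_
  unfold moveCoeff Admissible
  split_ifs <;> first | rfl | (exfalso; tauto)

end Admissible

section Cancellation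

variable {n k : ℕ} {R : Type*} [CommRing R]

lemma sum_schubCoeff_mul_schubCoeff {S : Finset ℕ} (hS : S ∈ Sset n k) (U : Finset ℕ) :
    ∑ T ∈ Sset n k, schubCoeff n k R U T * schubCoeff n k R T S =
      ∑ r ∈ Icc 1 k, ∑ r' ∈ Icc 1 k,
        if U = Sr (Sr S r) r' then moveCoeff n k R (Sr S r) r' * moveCoeff n k R S r else 0 := by
  simp only [schubCoeff_eq_sum _ S, mul_sum]
  rw [sum_comm]
  refine sum_congr rfl fun r hr => ?_
  have hcollapse : ∑ T ∈ Sset n k,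
      schubCoeff n k R U T * (if T = Sr S r then moveCoeff n k R S r else 0) =
        schubCoeff n k R U (Sr S r) * moveCoeff n k R S r := by
    simp only [mul_ite, mul_zero, sum_ite_eq', ite_eq_left_iff]
    intro hnot
    by_cases h : Admissible n k S r
    · have hcard := (mem_Sset_iff.mp hS).2
      obtain ⟨hr1, hrk⟩ := mem_Icc.mp hr
      exact absurd (mem_Sset_Sr hS hr1 (by omega) h.1) hnot
    · simp [moveCoeff, h]
  rw [hcollapse, schubCoeff_eq_sum, sum_mul]
  simp only [ite_mul, zero_mul]

lemma sum_schubCoeff_mul_schubCoeff_eq_zero {S : Finset ℕ} (hS : S ∈ Sset n k)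
    (U : Finset ℕ) : ∑ T ∈ Sset n k, schubCoeff n k R U T * schubCoeff n k R T S = 0 := by
  rw [sum_schubCoeff_mul_schubCoeff hS]
  refine sum_sum_eq_zero_of_antisymm _ _ (fun r hr => ?_) (fun r hr r' hr' hne => ?_)
  · by_cases h : Admissible n k S r
    · simp [moveCoeff, not_admissible_Sr_self hS hr h]
    · simp [moveCoeff, h]
  rw [moveCoeff_Sr_mul_moveCoeff hS hr hr' hne.symm, moveCoeff_Sr_mul_moveCoeff hS hr' hr hne]
  by_cases h : Admissible n k S r ∧ Admissible n k S r'
  · rw [Sr_comm hS hr h.1 hr' h.2 hne, mul_comm (moveCoeff n k R S r)]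
    split_ifs <;> first | (exfalso; omega) | ring
  · have h₁ : moveCoeff n k R S r' * moveCoeff n k R S r = 0 := by
      rcases not_and_or.mp h with h | h <;> simp [moveCoeff, h]
    rw [mul_comm (moveCoeff n k R S r), h₁]
    simp

lemma schubD_mul_self : schubD n k R * schubD n k R = 0 := by
  ext U S
  exact (sum_coe_sort (Sset n k) _).trans (sum_schubCoeff_mul_schubCoeff_eq_zero S.2 U)

end Cancellation

theorem stmt1_general (n k : ℕ) (R : Type*) [CommRing R] :
    (schubDelta n k R).comp (schubDelta n k R) = 0 ∧
    (∀ S ∈ Sset n k, ∀ r, 1 ≤ r → r ≤ k →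
      1 < nxt n S r - elt S r → Odd ((k : ℤ) - elt S r) →
      Sr S r ∈ Sset n k ∧ dS (Sr S r) = dS S + 1) := by
  refine ⟨?_, fun S hS r hr hrk hgap _ => ?_⟩
  · rw [schubDelta, ← Matrix.mulVecLin_mul, schubD_mul_self, Matrix.mulVecLin_zero]
  · have hrS : r ≤ S.card := (mem_Sset_iff.mp hS).2 ▸ hrk
    exact ⟨mem_Sset_Sr hS hr hrS hgap, by rw [dS, dS, dr_Sr hS hr hrS hgap le_rfl, if_pos hr]⟩

theorem stmt1 (n k : ℕ) (hk : k ≤ n) (R : Type*) [CommRing R] :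
    (schubDelta n k R).comp (schubDelta n k R) = 0 ∧
    (∀ S ∈ Sset n k, ∀ r, 1 ≤ r → r ≤ k →
      1 < nxt n S r - elt S r → Odd ((k : ℤ) - elt S r) →
      Sr S r ∈ Sset n k ∧ dS (Sr S r) = dS S + 1) :=
  stmt1_general n k R
end

section
/- Let r ≥ 1 be an integer and let C denote the chain complex of abelian groups with ℤ in homological degrees 1 and 0, zero elsewhere, and differential multiplication by 2 (the cone of ℤ →2→ ℤ). Then the r-fold tensor power C^{⊗r} is isomorphic, as a chain complex of abelian groups, to ⊕_{a=0}^{r−1} (C[a])^{⊕ binom(r−1, a)}, where C[a] is C shifted up by a homological degrees. -/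
open scoped BigOperators

/-- An isomorphism of (co)chain complexes of abelian groups, where a complex is presented by a
finite basis `ι`, a degree function `deg : ι → ℤ`, and the matrix `D` of its differential:
a `ℤ`-linear equivalence commuting with the differentials and preserving the grading. -/
def CxIso {ι κ : Type*} [Fintype ι] [Fintype κ] (R : Type*) [CommRing R]
    (D₁ : Matrix ι ι R) (deg₁ : ι → ℤ) (D₂ : Matrix κ κ R) (deg₂ : κ → ℤ) : Prop :=
  ∃ e : (ι → R) ≃ₗ[R] (κ → R),
    (∀ v, e (D₁.mulVec v) = D₂.mulVec (e v)) ∧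
    (∀ (m : ℤ) (v : ι → R), (∀ i, deg₁ i ≠ m → v i = 0) → ∀ j, deg₂ j ≠ m → e v j = 0) ∧
    (∀ (m : ℤ) (w : κ → R), (∀ j, deg₂ j ≠ m → w j = 0) → ∀ i, deg₁ i ≠ m → e.symm w i = 0)

/-- The `r`-fold tensor power `C^{⊗r}` of the chain complex `C = (ℤ →2→ ℤ)` (with `ℤ` in
homological degrees `1` and `0`), realized on its standard basis: the subsets `B ⊆ {1,…,r}`
(recording the factors in degree `1`), in homological degree `card B`, with the usual Koszul
signs.  `cubeDown r A B` is the coefficient of `A` in `d(B)`. -/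
def cubeDown (r : ℕ) : Matrix (Finset (Fin r)) (Finset (Fin r)) ℤ :=
  fun A B => ∑ i ∈ B, if A = B.erase i then (-1 : ℤ) ^ (B.filter (· < i)).card * 2 else 0

/-- The index set for `⊕_{a=0}^{r−1} (C[a])^{⊕ binom(r−1,a)}`: a triple `(a, c)` with
`0 ≤ a ≤ r−1` and `c < binom(r−1,a)` selecting a copy of `C[a]`, together with an element of
`Fin 2` recording the basis vector in homological degree `a + i`. -/
def shiftIdx (r : ℕ) : Finset (ℕ × ℕ) :=
  ((Finset.range r) ×ˢ Finset.range (2 ^ r)).filter fun p => p.2 < Nat.choose (r - 1) p.1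

/-- The differential of `⊕_{a=0}^{r−1} (C[a])^{⊕ binom(r−1,a)}`: multiplication by `2` from the
degree `a+1` generator to the degree `a` generator of each copy of `C[a]`. -/
def shiftD (r : ℕ) : Matrix (↥(shiftIdx r) × Fin 2) (↥(shiftIdx r) × Fin 2) ℤ :=
  fun x y => if x.1 = y.1 ∧ x.2 = 0 ∧ y.2 = 1 then 2 else 0

namespace Stmt5Aux
open Finset

variable {r : ℕ}

/-- Half of the cube differential: `vc U A` is the coefficient of `A` in `(1/2)·d(U)`. -/
def vc (U A : Finset (Fin r)) : ℤ :=
  ∑ i ∈ U, if A = U.erase i then (-1 : ℤ) ^ (U.filter (· < i)).card else 0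

lemma cube_eq (A B : Finset (Fin r)) : cubeDown r A B = 2 * vc B A := by
  unfold cubeDown vc
  rw [Finset.mul_sum]
  refine Finset.sum_congr rfl fun i _ => ?_
  split <;> ring

lemma erase_comm' (U : Finset (Fin r)) (i j : Fin r) :
    (U.erase i).erase j = (U.erase j).erase i := by
  ext x; simp only [Finset.mem_erase]; tauto

lemma sgn_pair_lt {U : Finset (Fin r)} {i j : Fin r} (hi : i ∈ U) (hlt : i < j) :
    (-1 : ℤ) ^ ((U.erase j).filter (· < i)).card * (-1) ^ (U.filter (· < j)).card
      + (-1) ^ ((U.erase i).filter (· < j)).card * (-1) ^ (U.filter (· < i)).card = 0 := by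
  have h1 : (U.erase j).filter (· < i) = U.filter (· < i) := by
    rw [Finset.filter_erase]
    apply Finset.erase_eq_of_notMem
    simp only [Finset.mem_filter]
    rintro ⟨-, hj⟩
    exact absurd (hlt.trans hj) (lt_irrefl i)
  have hmem : i ∈ U.filter (· < j) := Finset.mem_filter.2 ⟨hi, hlt⟩
  have h2 : ((U.erase i).filter (· < j)).card = (U.filter (· < j)).card - 1 := by
    rw [Finset.filter_erase, Finset.card_erase_of_mem hmem]
  obtain ⟨k, hk⟩ : ∃ k, (U.filter (· < j)).card = k + 1 :=
    ⟨(U.filter (· < j)).card - 1, (Nat.succ_pred_eq_of_pos (Finset.card_pos.2 ⟨i, hmem⟩)).symm⟩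
  rw [h1, h2, hk]
  simp only [Nat.add_sub_cancel, pow_succ]
  ring

lemma sgn_pair {U : Finset (Fin r)} {i j : Fin r} (hi : i ∈ U) (hj : j ∈ U) (hij : i ≠ j) :
    (-1 : ℤ) ^ ((U.erase j).filter (· < i)).card * (-1) ^ (U.filter (· < j)).card
      + (-1) ^ ((U.erase i).filter (· < j)).card * (-1) ^ (U.filter (· < i)).card = 0 := by
  rcases hij.lt_or_gt with h | h
  · exact sgn_pair_lt hi h
  · rw [add_comm]; exact sgn_pair_lt hj h

lemma vc_card {U A : Finset (Fin r)} (h : vc U A ≠ 0) : A.card + 1 = U.card := by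
  obtain ⟨i, hi, hne⟩ := Finset.exists_ne_zero_of_sum_ne_zero h
  have hA : A = U.erase i := by
    by_contra h'
    simp [h'] at hne
  have hpos : 0 < U.card := Finset.card_pos.2 ⟨i, hi⟩
  rw [hA, Finset.card_erase_of_mem hi]
  omega

lemma collapse (U : Finset (Fin r)) (f : Finset (Fin r) → ℤ) :
    ∑ C : Finset (Fin r), f C * vc U C
      = ∑ j ∈ U, f (U.erase j) * (-1) ^ (U.filter (· < j)).card := by
  unfold vc
  simp_rw [Finset.mul_sum]
  rw [Finset.sum_comm]
  refine Finset.sum_congr rfl fun j hj => ?_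
  simp_rw [mul_ite, mul_zero]
  rw [Finset.sum_ite_eq' Finset.univ (U.erase j)]
  simp

lemma d_squared (U B : Finset (Fin r)) :
    ∑ C : Finset (Fin r), vc C B * vc U C = 0 := by
  rw [collapse U (fun C => vc C B)]
  simp_rw [vc, Finset.sum_mul]
  rw [Finset.sum_sigma']
  refine Finset.sum_involution (fun x _ => ⟨x.2, x.1⟩) ?_ ?_ ?_ ?_
  · rintro ⟨j, i⟩ hx
    rw [Finset.mem_sigma] at hx
    obtain ⟨hj, hi'⟩ := hx
    have hi : i ∈ U := Finset.mem_of_mem_erase hi'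
    have hij : i ≠ j := Finset.ne_of_mem_erase hi'
    by_cases hB : B = (U.erase j).erase i
    · have hB' : B = (U.erase i).erase j := by rw [hB, erase_comm']
      simp only [if_pos hB, if_pos hB']
      exact sgn_pair hi hj hij
    · have hB' : ¬ B = (U.erase i).erase j := by rw [erase_comm']; exact hB
      simp [hB, hB']
  · rintro ⟨j, i⟩ hx hne
    rw [Finset.mem_sigma] at hx
    have hij : i ≠ j := Finset.ne_of_mem_erase hx.2
    simp only [ne_eq, Sigma.mk.inj_iff, heq_eq_eq]
    rintro ⟨rfl, -⟩
    exact hij rfl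
  · rintro ⟨j, i⟩ hx
    rw [Finset.mem_sigma] at hx ⊢
    have hi : i ∈ U := Finset.mem_of_mem_erase hx.2
    have hij : i ≠ j := Finset.ne_of_mem_erase hx.2
    exact ⟨hi, Finset.mem_erase.2 ⟨fun h => hij h.symm, hx.1⟩⟩
  · rintro ⟨j, i⟩ hx
    rfl

lemma d_vc (U B : Finset (Fin r)) :
    ∑ C : Finset (Fin r), cubeDown r B C * vc U C = 0 := by
  simp_rw [cube_eq, mul_assoc]
  rw [← Finset.mul_sum, d_squared, mul_zero]


variable (r) in
def Mmat [NeZero r] : Matrix (Finset (Fin r)) (Finset (Fin r)) ℤ :=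
  fun B A => if 0 ∈ A then (if B = A then 1 else 0) else vc (insert 0 A) B

variable (r) in
def Nmat [NeZero r] : Matrix (Finset (Fin r)) (Finset (Fin r)) ℤ :=
  fun B A => if 0 ∈ A then 0 else if 0 ∈ B then vc (insert 0 A) B else 0

variable [NeZero r]

lemma vc_insert_off (A B : Finset (Fin r)) (hA : (0 : Fin r) ∉ A) (hB : (0 : Fin r) ∉ B) :
    vc (insert 0 A) B = if B = A then 1 else 0 := by
  unfold vc
  rw [Finset.sum_insert hA]
  have h1 : (insert (0 : Fin r) A).erase 0 = A := Finset.erase_insert hA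
  have h2 : (insert (0 : Fin r) A).filter (· < (0 : Fin r)) = ∅ := by
    apply Finset.filter_eq_empty_iff.2
    intro x _
    simp [Fin.lt_def]
  rw [h1, h2]
  have h3 : ∀ i ∈ A, (if B = (insert (0:Fin r) A).erase i then
      (-1 : ℤ) ^ ((insert (0:Fin r) A).filter (· < i)).card else 0) = 0 := by
    intro i hi
    have hne : i ≠ 0 := fun h => hA (h ▸ hi)
    have h0 : (0 : Fin r) ∈ (insert (0:Fin r) A).erase i :=
      Finset.mem_erase.2 ⟨fun h => hne h.symm, Finset.mem_insert_self _ _⟩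
    have : B ≠ (insert (0:Fin r) A).erase i := fun h => hB (h ▸ h0)
    simp [this]
  rw [Finset.sum_eq_zero h3]
  simp

lemma M_eq : Mmat r = 1 + Nmat r := by
  ext B A
  simp only [Matrix.add_apply, Matrix.one_apply, Mmat, Nmat]
  by_cases hA : (0 : Fin r) ∈ A
  · simp [hA]
  · rw [if_neg hA, if_neg hA]
    by_cases hB : (0 : Fin r) ∈ B
    · have : B ≠ A := fun h => hA (h ▸ hB)
      simp [hB, this]
    · rw [vc_insert_off A B hA hB]
      simp [hB]

lemma N_sq : Nmat r * Nmat r = 0 := by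
  ext C A
  rw [Matrix.mul_apply]
  rw [Matrix.zero_apply]
  apply Finset.sum_eq_zero
  intro B _
  by_cases hB : (0 : Fin r) ∈ B <;> simp [Nmat, hB]

lemma Minv_left : (1 - Nmat r) * Mmat r = 1 := by
  rw [M_eq]
  have : (1 - Nmat r) * (1 + Nmat r) = 1 - Nmat r * Nmat r := by noncomm_ring
  rw [this, N_sq, sub_zero]

lemma Minv_right : Mmat r * (1 - Nmat r) = 1 := by
  rw [M_eq]
  have : (1 + Nmat r) * (1 - Nmat r) = 1 - Nmat r * Nmat r := by noncomm_ring
  rw [this, N_sq, sub_zero]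

lemma M_card {B A : Finset (Fin r)} (h : Mmat r B A ≠ 0) : B.card = A.card := by
  unfold Mmat at h
  by_cases hA : (0 : Fin r) ∈ A
  · rw [if_pos hA] at h
    have : B = A := by by_contra h'; simp [h'] at h
    rw [this]
  · rw [if_neg hA] at h
    have := vc_card h
    rw [Finset.card_insert_of_notMem hA] at this
    omega

lemma Minv_card {B A : Finset (Fin r)} (h : (1 - Nmat r) B A ≠ 0) : B.card = A.card := by
  rw [Matrix.sub_apply, Matrix.one_apply] at h
  by_cases hBA : B = A
  · rw [hBA]
  · rw [if_neg hBA] at h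
    have hN : Nmat r B A ≠ 0 := by intro h'; rw [h'] at h; exact h (by ring)
    unfold Nmat at hN
    by_cases hA : (0 : Fin r) ∈ A
    · simp [hA] at hN
    · rw [if_neg hA] at hN
      by_cases hB : (0 : Fin r) ∈ B
      · rw [if_pos hB] at hN
        have := vc_card hN
        rw [Finset.card_insert_of_notMem hA] at this
        omega
      · simp [hB] at hN


lemma exists_fiber_equiv {α β : Type*} [Fintype α] [Fintype β]
    (f : α → ℕ) (g : β → ℕ)
    (h : ∀ m, Fintype.card {a // f a = m} = Fintype.card {b // g b = m}) :
    ∃ e : α ≃ β, ∀ a, g (e a) = f a := by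
  classical
  let E : ∀ m, {a // f a = m} ≃ {b // g b = m} := fun m => Fintype.equivOfCardEq (h m)
  refine ⟨(Equiv.sigmaFiberEquiv f).symm.trans
    ((Equiv.sigmaCongrRight E).trans (Equiv.sigmaFiberEquiv g)), fun a => ?_⟩
  have h1 : (Equiv.sigmaFiberEquiv f).symm a = ⟨f a, ⟨a, rfl⟩⟩ := by
    apply (Equiv.sigmaFiberEquiv f).injective
    rw [Equiv.apply_symm_apply]
    rfl
  show g ((Equiv.sigmaFiberEquiv g) ((Equiv.sigmaCongrRight E) ((Equiv.sigmaFiberEquiv f).symm a))) = f a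
  rw [h1]
  exact (E (f a) ⟨a, rfl⟩).2

lemma choose_le_two_pow (n k : ℕ) : n.choose k ≤ 2 ^ n := by
  rcases le_or_gt k n with h | h
  · calc n.choose k ≤ ∑ i ∈ range (n + 1), n.choose i :=
        Finset.single_le_sum (fun _ _ => Nat.zero_le _) (mem_range.2 (by omega))
    _ = 2 ^ n := Nat.sum_range_choose n
  · rw [Nat.choose_eq_zero_of_lt h]; positivity

lemma card_shift_fiber (r m : ℕ) (hr : 1 ≤ r) :
    ((shiftIdx r).filter fun x => x.1 = m).card = (r - 1).choose m := by
  rcases lt_or_ge m r with hm | hm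
  · rw [show (r - 1).choose m = (Finset.range ((r - 1).choose m)).card from (Finset.card_range _).symm]
    refine Finset.card_bij' (fun p _ => p.2) (fun c _ => (m, c)) ?_ ?_ ?_ ?_
    · intro p hp
      simp only [shiftIdx, Finset.mem_filter, Finset.mem_product, Finset.mem_range] at hp
      obtain ⟨⟨⟨-, -⟩, h3⟩, h4⟩ := hp
      rw [Finset.mem_range]
      show p.2 < _
      rw [← h4]
      exact h3
    · intro c hc
      rw [Finset.mem_range] at hc
      simp only [shiftIdx, Finset.mem_filter, Finset.mem_product, Finset.mem_range]
      have h1 : (r - 1).choose m ≤ 2 ^ r := by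
        calc (r - 1).choose m ≤ 2 ^ (r - 1) := choose_le_two_pow _ _
        _ ≤ 2 ^ r := Nat.pow_le_pow_right (by omega) (by omega)
      exact ⟨⟨⟨hm, by omega⟩, by simpa using hc⟩, trivial⟩
    · intro p hp
      simp only [Finset.mem_filter] at hp
      exact Prod.ext hp.2.symm rfl
    · intro c _
      rfl
  · rw [Nat.choose_eq_zero_of_lt (by omega), Finset.card_eq_zero, Finset.filter_eq_empty_iff]
    intro x hx
    simp only [shiftIdx, Finset.mem_filter, Finset.mem_product, Finset.mem_range] at hx
    omega


lemma card_subsets_fiber (m : ℕ) :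
    (Finset.univ.filter fun U : Finset (Fin r) => (0 : Fin r) ∈ U ∧ U.card = m + 1).card
      = (r - 1).choose m := by
  have hcard : ((univ : Finset (Fin r)).erase 0).card = r - 1 := by
    rw [Finset.card_erase_of_mem (Finset.mem_univ _), Finset.card_univ, Fintype.card_fin]
  rw [← hcard, ← Finset.card_powersetCard]
  refine Finset.card_bij' (fun U _ => U.erase 0) (fun S _ => insert 0 S) ?_ ?_ ?_ ?_
  · intro U hU
    rw [Finset.mem_filter] at hU
    obtain ⟨-, h0, hc⟩ := hU
    rw [Finset.mem_powersetCard]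
    constructor
    · intro x hx
      rw [Finset.mem_erase] at hx ⊢
      exact ⟨hx.1, Finset.mem_univ x⟩
    · rw [Finset.card_erase_of_mem h0, hc]
      omega
  · intro S hS
    rw [Finset.mem_powersetCard] at hS
    have h0S : (0 : Fin r) ∉ S := fun h => by
      have := hS.1 h
      rw [Finset.mem_erase] at this
      exact this.1 rfl
    rw [Finset.mem_filter]
    exact ⟨Finset.mem_univ _, Finset.mem_insert_self _ _,
      by rw [Finset.card_insert_of_notMem h0S, hS.2]⟩
  · intro U hU
    rw [Finset.mem_filter] at hU
    exact Finset.insert_erase hU.2.1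
  · intro S hS
    rw [Finset.mem_powersetCard] at hS
    have h0S : (0 : Fin r) ∉ S := fun h => by
      have := hS.1 h
      rw [Finset.mem_erase] at this
      exact this.1 rfl
    exact Finset.erase_insert h0S

def pairEquiv {β : Type*} (h : β ≃ {U : Finset (Fin r) // (0 : Fin r) ∈ U}) :
    β × Fin 2 ≃ Finset (Fin r) where
  toFun y := if y.2 = 1 then (h y.1).1 else (h y.1).1.erase 0
  invFun A := if hA : (0 : Fin r) ∈ A then (h.symm ⟨A, hA⟩, 1)
    else (h.symm ⟨insert 0 A, Finset.mem_insert_self _ _⟩, 0)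
  left_inv := by
    rintro ⟨p, i⟩
    have hi : i = 0 ∨ i = 1 := by omega
    rcases hi with rfl | rfl
    · dsimp only
      rw [if_neg (by decide : ¬ ((0 : Fin 2) = 1))]
      rw [dif_neg (Finset.notMem_erase (0 : Fin r) (h p).1)]
      have h1 : insert (0 : Fin r) ((h p).1.erase 0) = (h p).1 :=
        Finset.insert_erase (h p).2
      simp only [h1, Subtype.coe_eta, Equiv.symm_apply_apply]
    · dsimp only
      rw [if_pos rfl, dif_pos (h p).2]
      simp only [Subtype.coe_eta, Equiv.symm_apply_apply]
  right_inv := by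
    intro A
    by_cases hA : (0 : Fin r) ∈ A
    · dsimp only
      rw [dif_pos hA]
      rw [if_pos rfl, Equiv.apply_symm_apply]
    · dsimp only
      rw [dif_neg hA]
      rw [if_neg (by decide : ¬ ((0 : Fin 2) = 1)), Equiv.apply_symm_apply]
      exact Finset.erase_insert hA

lemma pairEquiv_one {β : Type*} (h : β ≃ {U : Finset (Fin r) // (0 : Fin r) ∈ U}) (p : β) :
    pairEquiv h (p, 1) = (h p).1 := by simp [pairEquiv]

lemma pairEquiv_zero {β : Type*} (h : β ≃ {U : Finset (Fin r) // (0 : Fin r) ∈ U}) (p : β) :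
    pairEquiv h (p, 0) = (h p).1.erase 0 := by simp [pairEquiv]

lemma exists_gE (hr : 1 ≤ r) : ∃ gE : (↥(shiftIdx r) × Fin 2) ≃ Finset (Fin r),
    (∀ y, (gE y).card = y.1.1.1 + (y.2 : ℕ)) ∧
    (∀ p : ↥(shiftIdx r), (0 : Fin r) ∈ gE (p, 1)) ∧
    (∀ p : ↥(shiftIdx r), gE (p, 0) = (gE (p, 1)).erase 0) := by
  classical
  -- fiber cardinalities agree
  have hfib : ∀ m, Fintype.card {p : ↥(shiftIdx r) // p.1.1 = m}
      = Fintype.card {U : {U : Finset (Fin r) // (0 : Fin r) ∈ U} // U.1.card - 1 = m} := by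
    intro m
    have e1 : {p : ↥(shiftIdx r) // p.1.1 = m} ≃ {x : ℕ × ℕ // x ∈ shiftIdx r ∧ x.1 = m} :=
      Equiv.subtypeSubtypeEquivSubtypeInter (· ∈ shiftIdx r) (fun x => x.1 = m)
    have e2 : {x : ℕ × ℕ // x ∈ shiftIdx r ∧ x.1 = m}
        ≃ {x : ℕ × ℕ // x ∈ (shiftIdx r).filter fun x => x.1 = m} :=
      Equiv.subtypeEquivRight (fun x => (Finset.mem_filter.trans (by tauto)).symm)
    have e3 : {U : {U : Finset (Fin r) // (0 : Fin r) ∈ U} // U.1.card - 1 = m}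
        ≃ {U : Finset (Fin r) // (0 : Fin r) ∈ U ∧ U.card - 1 = m} :=
      Equiv.subtypeSubtypeEquivSubtypeInter (fun U : Finset (Fin r) => (0 : Fin r) ∈ U)
        (fun U => U.card - 1 = m)
    have e4 : {U : Finset (Fin r) // (0 : Fin r) ∈ U ∧ U.card - 1 = m}
        ≃ {U : Finset (Fin r) // (0 : Fin r) ∈ U ∧ U.card = m + 1} := by
      refine Equiv.subtypeEquivRight fun U => ?_
      constructor
      · rintro ⟨h0, hc⟩
        have : 0 < U.card := Finset.card_pos.2 ⟨0, h0⟩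
        exact ⟨h0, by omega⟩
      · rintro ⟨h0, hc⟩
        exact ⟨h0, by omega⟩
    rw [Fintype.card_congr (e1.trans e2), Fintype.card_congr (e3.trans e4)]
    rw [Fintype.card_coe, Fintype.card_subtype]
    rw [card_shift_fiber r m hr, card_subsets_fiber m]
  obtain ⟨h, hh⟩ := exists_fiber_equiv (fun p : ↥(shiftIdx r) => p.1.1)
    (fun U : {U : Finset (Fin r) // (0 : Fin r) ∈ U} => U.1.card - 1) hfib
  have hcard : ∀ p : ↥(shiftIdx r), (h p).1.card = p.1.1 + 1 := by
    intro p
    have h1 := hh p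
    have h2 : 0 < (h p).1.card := Finset.card_pos.2 ⟨0, (h p).2⟩
    omega
  refine ⟨pairEquiv h, ?_, ?_, ?_⟩
  · rintro ⟨p, i⟩
    have hi : i = 0 ∨ i = 1 := by omega
    rcases hi with rfl | rfl
    · rw [pairEquiv_zero, Finset.card_erase_of_mem (h p).2, hcard p]
      simp
    · rw [pairEquiv_one, hcard p]
      simp
  · intro p
    rw [pairEquiv_one]
    exact (h p).2
  · intro p
    rw [pairEquiv_zero, pairEquiv_one]


end Stmt5Aux

open Stmt5Aux

/-- `C^{⊗r} ≅ ⊕_{a=0}^{r−1} (C[a])^{⊕ binom(r−1,a)}` as chain complexes of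
abelian groups. -/
theorem stmt5 (r : ℕ) (hr : 1 ≤ r) :
    CxIso ℤ (cubeDown r) (fun B => (B.card : ℤ))
      (shiftD r) (fun x => (x.1.1.1 : ℤ) + (x.2 : ℕ)) := by
  haveI : NeZero r := ⟨by omega⟩
  classical
  obtain ⟨gE, hdeg, h0mem, herase⟩ := Stmt5Aux.exists_gE hr
  let m1 : (Finset (Fin r) → ℤ) ≃ₗ[ℤ] (Finset (Fin r) → ℤ) :=
    LinearEquiv.ofLinear (Matrix.mulVecLin (1 - Stmt5Aux.Nmat r))
      (Matrix.mulVecLin (Stmt5Aux.Mmat r))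
      (by rw [← Matrix.mulVecLin_mul, Stmt5Aux.Minv_left, Matrix.mulVecLin_one])
      (by rw [← Matrix.mulVecLin_mul, Stmt5Aux.Minv_right, Matrix.mulVecLin_one])
  let m2 : (Finset (Fin r) → ℤ) ≃ₗ[ℤ] ((↥(shiftIdx r) × Fin 2) → ℤ) :=
    LinearEquiv.funCongrLeft ℤ ℤ gE
  refine ⟨m1.trans m2, ?_, ?_, ?_⟩
  · -- commutation with differentials
    have key : ∀ A B : Finset (Fin r), ∑ C : Finset (Fin r), cubeDown r B C * Mmat r C A
        = ∑ C : Finset (Fin r), Mmat r B C * shiftD r (gE.symm C) (gE.symm A) := by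
      intro A B
      obtain ⟨⟨p, i⟩, hy⟩ : ∃ y, gE y = A := ⟨gE.symm A, gE.apply_symm_apply A⟩
      have hginv : gE.symm A = (p, i) := by rw [← hy, Equiv.symm_apply_apply]
      have hi : i = 0 ∨ i = 1 := by omega
      rcases hi with rfl | rfl
      · have hA : A = (gE (p, 1)).erase 0 := by rw [← hy, herase]
        have h0A : (0 : Fin r) ∉ A := by rw [hA]; exact Finset.notMem_erase _ _
        have hins : insert (0 : Fin r) A = gE (p, 1) := by
          rw [hA]; exact Finset.insert_erase (h0mem p)
        have hL : ∀ C, Mmat r C A = vc (gE (p, 1)) C := by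
          intro C; unfold Mmat; rw [if_neg h0A, hins]
        have hR : ∀ C, shiftD r (gE.symm C) (gE.symm A) = 0 := by
          intro C
          rw [hginv]
          have hns : ¬((gE.symm C).1 = p ∧ (gE.symm C).2 = 0 ∧ ((p, (0 : Fin 2)).2 = 1)) := by
            rintro ⟨-, -, h2⟩
            exact Fin.zero_ne_one h2
          exact if_neg hns
        simp_rw [hL, hR, mul_zero, Finset.sum_const_zero]
        exact d_vc (gE (p, 1)) B
      · have h0A : (0 : Fin r) ∈ A := by rw [← hy]; exact h0mem p
        have hL : ∀ C, Mmat r C A = if C = A then 1 else 0 := by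
          intro C; unfold Mmat; rw [if_pos h0A]
        have hE0 : gE (p, 0) = A.erase 0 := by rw [herase, hy]
        have hR : ∀ C, shiftD r (gE.symm C) (gE.symm A) = if C = A.erase 0 then 2 else 0 := by
          intro C
          rw [hginv]
          unfold shiftD
          by_cases hC : C = A.erase 0
          · rw [if_pos hC, if_pos]
            rw [← hE0] at hC
            subst hC
            rw [Equiv.symm_apply_apply]
            exact ⟨rfl, rfl, rfl⟩
          · rw [if_neg hC, if_neg]
            rintro ⟨h1, h2, -⟩
            apply hC
            have : gE.symm C = (p, 0) := Prod.ext h1 h2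
            rw [← hE0, ← this, Equiv.apply_symm_apply]
        simp_rw [hL, hR, mul_ite, mul_one, mul_zero]
        rw [Finset.sum_ite_eq' Finset.univ A, Finset.sum_ite_eq' Finset.univ (A.erase 0)]
        simp only [Finset.mem_univ, if_true]
        have hM : Mmat r B (A.erase 0) = vc A B := by
          unfold Mmat
          rw [if_neg (Finset.notMem_erase _ _), Finset.insert_erase h0A]
        rw [hM, cube_eq]
        ring
    have cond1symm : ∀ w : (↥(shiftIdx r) × Fin 2) → ℤ,
        (cubeDown r).mulVec ((m1.trans m2).symm w)
          = (m1.trans m2).symm ((shiftD r).mulVec w) := by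
      intro w
      have e1 : (m1.trans m2).symm w = (Mmat r).mulVec (fun A => w (gE.symm A)) := rfl
      have e2 : (m1.trans m2).symm ((shiftD r).mulVec w)
          = (Mmat r).mulVec (fun A => ((shiftD r).mulVec w) (gE.symm A)) := rfl
      rw [e1, e2, Matrix.mulVec_mulVec]
      funext B
      show ∑ A : Finset (Fin r), (cubeDown r * Mmat r) B A * w (gE.symm A)
        = ∑ A : Finset (Fin r), Mmat r B A * ((shiftD r).mulVec w) (gE.symm A)
      calc ∑ A : Finset (Fin r), (cubeDown r * Mmat r) B A * w (gE.symm A)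
          = ∑ A : Finset (Fin r), (∑ C : Finset (Fin r),
              Mmat r B C * shiftD r (gE.symm C) (gE.symm A)) * w (gE.symm A) := by
            refine Finset.sum_congr rfl fun A _ => ?_
            rw [Matrix.mul_apply, key A B]
        _ = ∑ C : Finset (Fin r), Mmat r B C *
              ∑ A : Finset (Fin r), shiftD r (gE.symm C) (gE.symm A) * w (gE.symm A) := by
            simp_rw [Finset.sum_mul, mul_assoc]
            rw [Finset.sum_comm]
            simp_rw [← Finset.mul_sum]
        _ = ∑ C : Finset (Fin r), Mmat r B C * ((shiftD r).mulVec w) (gE.symm C) := by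
            refine Finset.sum_congr rfl fun C _ => ?_
            congr 1
            rw [show ((shiftD r).mulVec w) (gE.symm C)
              = ∑ y : ↥(shiftIdx r) × Fin 2, shiftD r (gE.symm C) y * w y from rfl]
            exact Equiv.sum_comp gE.symm (fun y => shiftD r (gE.symm C) y * w y)
    intro v
    have h2 := cond1symm ((m1.trans m2) v)
    rw [LinearEquiv.symm_apply_apply] at h2
    rw [h2, LinearEquiv.apply_symm_apply]
  · -- grading, forward
    intro m v hv j hj
    have he : (m1.trans m2) v j = ∑ A : Finset (Fin r), (1 - Nmat r) (gE j) A * v A := rfl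
    rw [he]
    apply Finset.sum_eq_zero
    intro A _
    by_cases hvA : v A = 0
    · rw [hvA, mul_zero]
    by_cases hEnt : (1 - Nmat r) (gE j) A = 0
    · rw [hEnt, zero_mul]
    exfalso
    apply hj
    have h1 : (A.card : ℤ) = m := by
      by_contra h
      exact hvA (hv A h)
    have h2 : (gE j).card = A.card := Minv_card hEnt
    have h3 := hdeg j
    show (j.1.1.1 : ℤ) + ((j.2 : ℕ) : ℤ) = m
    rw [← h1, ← h2, h3]
    push_cast
    ring
  · -- grading, backward
    intro m w hw B hB
    have he : (m1.trans m2).symm w B = ∑ A : Finset (Fin r), Mmat r B A * w (gE.symm A) := rfl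
    rw [he]
    apply Finset.sum_eq_zero
    intro A _
    by_cases hwA : w (gE.symm A) = 0
    · rw [hwA, mul_zero]
    by_cases hEnt : Mmat r B A = 0
    · rw [hEnt, zero_mul]
    exfalso
    apply hB
    have h1 : ((gE.symm A).1.1.1 : ℤ) + (((gE.symm A).2 : ℕ) : ℤ) = m := by
      by_contra h
      exact hwA (hw _ h)
    have h2 : (gE (gE.symm A)).card = (gE.symm A).1.1.1 + ((gE.symm A).2 : ℕ) := hdeg _
    rw [Equiv.apply_symm_apply] at h2
    have h3 : B.card = A.card := M_card hEnt
    show (B.card : ℤ) = m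
    rw [h3, ← h1, h2]
    push_cast
    ring
end

section
/- Let 0 ≤ k ≤ n be integers and let S, T ∈ {n;k} with s_i ≤ t_i for all i. Then S ≤_adm T if and only if for every i ∈ {1,…,k}: either t_i = s_i, or (t_i = s_i + 1 and i ∈ Out(S) ∩ In(T)). -/
open scoped BigOperators

/-- `In(S) = {i ∈ {1,…,k} : s_i ≡ k (mod 2) and s_{i−1} < s_i − 1}` (convention `s_0 = 0`). -/
def InS (k : ℕ) (S : Finset ℕ) : Finset ℕ :=
  (Finset.Icc 1 k).filter fun i => elt S i % 2 = k % 2 ∧ prv S i + 1 < elt S i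

/-- `Out(S) = {i ∈ {1,…,k} : s_i ≢ k (mod 2) and s_i + 1 < s_{i+1}}` (convention `s_{k+1} = n+1`). -/
def OutS (n k : ℕ) (S : Finset ℕ) : Finset ℕ :=
  (Finset.Icc 1 k).filter fun i => ¬ (elt S i % 2 = k % 2) ∧ elt S i + 1 < nxt n S i

/-- An elementary admissible step `S ⋖ S_r`, for `1 ≤ r ≤ k` with `s_{r+1} − s_r > 1`
and `k − s_r` odd. -/
def AdmStep (n k : ℕ) (S T : Finset ℕ) : Prop :=
  ∃ r, 1 ≤ r ∧ r ≤ k ∧ 1 < nxt n S r - elt S r ∧ Odd ((k : ℤ) - elt S r) ∧ T = Sr S r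

/-- The admissible order `≤_adm`: the reflexive-transitive closure of elementary steps. -/
def AdmLE (n k : ℕ) (S T : Finset ℕ) : Prop := Relation.ReflTransGen (AdmStep n k) S T


lemma elt_eq_orderEmb {S : Finset ℕ} {k : ℕ} (h : S.card = k) {i : ℕ} (h1 : 1 ≤ i) (h2 : i ≤ k) :
    elt S i = S.orderEmbOfFin h ⟨i - 1, by omega⟩ := by
  rw [Finset.orderEmbOfFin_apply, elt]
  rw [List.getD_eq_getElem _ _ (by rw [Finset.length_sort, h]; omega)]
  rfl

lemma elt_mem_s8 {S : Finset ℕ} {k : ℕ} (h : S.card = k) {i : ℕ} (h1 : 1 ≤ i) (h2 : i ≤ k) :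
    elt S i ∈ S := by
  rw [elt_eq_orderEmb h h1 h2]; exact Finset.orderEmbOfFin_mem _ _ _

lemma elt_strictMono {S : Finset ℕ} {k : ℕ} (h : S.card = k) {i j : ℕ}
    (h1 : 1 ≤ i) (hij : i < j) (h2 : j ≤ k) : elt S i < elt S j := by
  rw [elt_eq_orderEmb h h1 (by omega), elt_eq_orderEmb h (by omega) h2]
  exact (S.orderEmbOfFin h).strictMono (by simp [Fin.lt_def]; omega)

lemma elt_surj {S : Finset ℕ} {k : ℕ} (h : S.card = k) {x : ℕ} (hx : x ∈ S) :
    ∃ i, 1 ≤ i ∧ i ≤ k ∧ elt S i = x := by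
  have : x ∈ Set.range (S.orderEmbOfFin h) := by rw [Finset.range_orderEmbOfFin]; exact hx
  obtain ⟨j, hj⟩ := this
  refine ⟨j + 1, by omega, by omega, ?_⟩
  rw [elt_eq_orderEmb h (by omega) (by omega), ← hj]
  congr 1

lemma mem_Sset {n k : ℕ} {S : Finset ℕ} (h : S ∈ Sset n k) :
    S ⊆ Finset.Icc 1 n ∧ S.card = k := Finset.mem_powersetCard.mp h

lemma elt_range {n k : ℕ} {S : Finset ℕ} (hS : S ∈ Sset n k) {i : ℕ}
    (h1 : 1 ≤ i) (h2 : i ≤ k) : 1 ≤ elt S i ∧ elt S i ≤ n := by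
  obtain ⟨hsub, hcard⟩ := mem_Sset hS
  have := hsub (elt_mem_s8 hcard h1 h2)
  simpa using this

lemma elt_lt_nxt {n k : ℕ} {S : Finset ℕ} (hS : S ∈ Sset n k) {i : ℕ}
    (h1 : 1 ≤ i) (h2 : i ≤ k) : elt S i < nxt n S i := by
  obtain ⟨hsub, hcard⟩ := mem_Sset hS
  rw [nxt, hcard]
  by_cases hik : i = k
  · rw [if_pos hik]
    have := (elt_range hS h1 h2).2
    omega
  · rw [if_neg hik]
    exact elt_strictMono hcard h1 (by omega) (by omega)

lemma prv_lt_elt {n k : ℕ} {S : Finset ℕ} (hS : S ∈ Sset n k) {i : ℕ}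
    (h1 : 1 ≤ i) (h2 : i ≤ k) : prv S i < elt S i := by
  obtain ⟨hsub, hcard⟩ := mem_Sset hS
  rw [prv]
  by_cases hi1 : i = 1
  · subst hi1
    rw [if_pos rfl]
    have := (elt_range hS h1 h2).1
    omega
  · rw [if_neg hi1]
    have : elt S (i-1) < elt S i := elt_strictMono hcard (by omega) (by omega) h2
    omega

lemma eq_of_elt_eq {n k : ℕ} {S T : Finset ℕ} (hS : S ∈ Sset n k) (hT : T ∈ Sset n k)
    (h : ∀ i ∈ Finset.Icc 1 k, elt S i = elt T i) : S = T := by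
  obtain ⟨_, hcS⟩ := mem_Sset hS
  obtain ⟨_, hcT⟩ := mem_Sset hT
  ext x
  constructor
  · intro hx
    obtain ⟨i, h1, h2, he⟩ := elt_surj hcS hx
    rw [← he, h i (Finset.mem_Icc.mpr ⟨h1, h2⟩)]
    exact elt_mem_s8 hcT h1 h2
  · intro hx
    obtain ⟨i, h1, h2, he⟩ := elt_surj hcT hx
    rw [← he, ← h i (Finset.mem_Icc.mpr ⟨h1, h2⟩)]
    exact elt_mem_s8 hcS h1 h2

section Step
variable {n k : ℕ} {S : Finset ℕ} (hS : S ∈ Sset n k) {r : ℕ}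
  (hr1 : 1 ≤ r) (hrk : r ≤ k) (hgap : elt S r + 1 < nxt n S r)

include hS hr1 hrk hgap

lemma succ_not_mem : elt S r + 1 ∉ S := by
  obtain ⟨hsub, hcard⟩ := mem_Sset hS
  intro hmem
  obtain ⟨j, hj1, hj2, hje⟩ := elt_surj hcard hmem
  have hjr : r < j := by
    by_contra hc
    have : elt S j ≤ elt S r := by
      rcases eq_or_lt_of_le (not_lt.mp hc) with h | h
      · rw [h]
      · exact le_of_lt (elt_strictMono hcard hj1 h hrk)
    omega
  have hrk' : r < k := by omega
  have : nxt n S r = elt S (r+1) := by rw [nxt, hcard, if_neg (by omega)]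
  have h2 : elt S (r+1) ≤ elt S j := by
    rcases eq_or_lt_of_le (show r + 1 ≤ j by omega) with h | h
    · rw [h]
    · exact le_of_lt (elt_strictMono hcard (by omega) h hj2)
  omega

lemma Sr_mem_Sset : Sr S r ∈ Sset n k := by
  obtain ⟨hsub, hcard⟩ := mem_Sset hS
  have hmem : elt S r ∈ S := elt_mem_s8 hcard hr1 hrk
  have hnot := succ_not_mem hS hr1 hrk hgap
  rw [Sset, Finset.mem_powersetCard]
  constructor
  · intro x hx
    rw [Sr, Finset.mem_insert] at hx
    rcases hx with h | h
    · have h1 := (elt_range hS hr1 hrk).1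
      have hn : nxt n S r ≤ n + 1 := by
        rw [nxt, hcard]
        by_cases hik : r = k
        · simp [hik]
        · rw [if_neg hik]
          have := (elt_range hS (i := r+1) (by omega) (by omega)).2
          omega
      simp only [Finset.mem_Icc]
      omega
    · exact hsub (Finset.mem_of_mem_erase h)
  · rw [Sr, Finset.card_insert_of_notMem (fun hc => hnot (Finset.mem_of_mem_erase hc)),
      Finset.card_erase_of_mem hmem]
    omega

lemma elt_Sr_s8 {i : ℕ} (h1 : 1 ≤ i) (h2 : i ≤ k) :
    elt (Sr S r) i = if i = r then elt S r + 1 else elt S i := by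
  obtain ⟨hsub, hcard⟩ := mem_Sset hS
  have hcard' : (Sr S r).card = k := (mem_Sset (Sr_mem_Sset hS hr1 hrk hgap)).2
  have hnxt : r < k → nxt n S r = elt S (r+1) := fun h => by
    rw [nxt, hcard, if_neg (by omega)]
  set f : Fin k → ℕ := fun j => if (j : ℕ) = r - 1 then elt S r + 1 else elt S (j + 1) with hf
  have hfmem : ∀ j, f j ∈ Sr S r := by
    intro j
    simp only [hf]
    by_cases hj : (j : ℕ) = r - 1
    · rw [if_pos hj, Sr]; exact Finset.mem_insert_self _ _
    · rw [if_neg hj, Sr, Finset.mem_insert]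
      right
      rw [Finset.mem_erase]
      refine ⟨?_, elt_mem_s8 hcard (by omega) (by omega)⟩
      intro hc
      have : (j : ℕ) + 1 = r := by
        by_contra hc2
        rcases lt_or_gt_of_ne hc2 with h | h
        · exact absurd hc (ne_of_lt (elt_strictMono hcard (by omega) h hrk))
        · exact absurd hc.symm (ne_of_lt (elt_strictMono hcard hr1 h (by omega)))
      omega
  have hfmono : StrictMono f := by
    intro a b hab
    simp only [hf]
    by_cases ha : (a : ℕ) = r - 1 <;> by_cases hb : (b : ℕ) = r - 1
    · omega
    · rw [if_pos ha, if_neg hb]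
      have hblt : r < (b : ℕ) + 1 := by
        have := Fin.lt_def.mp hab; omega
      have hrlt : r < k := by omega
      have : elt S (r + 1) ≤ elt S ((b : ℕ) + 1) := by
        rcases eq_or_lt_of_le (show r + 1 ≤ (b : ℕ) + 1 by omega) with h | h
        · rw [h]
        · exact le_of_lt (elt_strictMono hcard (by omega) h (by omega))
      have := hnxt hrlt
      omega
    · rw [if_neg ha, if_pos hb]
      have halt : (a : ℕ) + 1 < r := by
        have := Fin.lt_def.mp hab; omega
      have : elt S ((a : ℕ) + 1) < elt S r := elt_strictMono hcard (by omega) halt hrk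
      omega
    · rw [if_neg ha, if_neg hb]
      exact elt_strictMono hcard (by omega) (by have := Fin.lt_def.mp hab; omega) (by omega)
  have key := Finset.orderEmbOfFin_unique hcard' hfmem hfmono
  have : elt (Sr S r) i = f ⟨i - 1, by omega⟩ := by
    rw [elt_eq_orderEmb hcard' h1 h2, ← key]
  rw [this]
  simp only [hf]
  by_cases hi : i = r
  · rw [if_pos (by omega : (i:ℕ) - 1 = r - 1), if_pos hi]
  · rw [if_neg (by omega : ¬ (i:ℕ) - 1 = r - 1), if_neg hi]
    congr 1
    omega

end Step

lemma odd_sub_iff {k s : ℕ} : Odd ((k : ℤ) - s) ↔ ¬ (s % 2 = k % 2) := by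
  rw [Int.odd_iff]
  omega

lemma mem_OutS {n k : ℕ} {S : Finset ℕ} {i : ℕ} :
    i ∈ OutS n k S ↔ (1 ≤ i ∧ i ≤ k) ∧ ¬ (elt S i % 2 = k % 2) ∧ elt S i + 1 < nxt n S i := by
  rw [OutS, Finset.mem_filter, Finset.mem_Icc]

lemma mem_InS {k : ℕ} {S : Finset ℕ} {i : ℕ} :
    i ∈ InS k S ↔ (1 ≤ i ∧ i ≤ k) ∧ elt S i % 2 = k % 2 ∧ prv S i + 1 < elt S i := by
  rw [InS, Finset.mem_filter, Finset.mem_Icc]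

lemma nxt_eq {n k : ℕ} {S : Finset ℕ} (hcard : S.card = k) (i : ℕ) :
    nxt n S i = if i = k then n + 1 else elt S (i + 1) := by rw [nxt, hcard]

lemma admLE_props {n k : ℕ} {S T : Finset ℕ} (hS : S ∈ Sset n k) (h : AdmLE n k S T) :
    T ∈ Sset n k ∧ ∀ i ∈ Finset.Icc 1 k, elt S i ≤ elt T i := by
  induction h with
  | refl => exact ⟨hS, fun i _ => le_rfl⟩
  | tail hab hstep ih =>
    rename_i U V
    obtain ⟨hU, hle⟩ := ih
    obtain ⟨r, hr1, hrk, hgap', hodd, rfl⟩ := hstep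
    have hgap : elt U r + 1 < nxt n U r := by omega
    refine ⟨Sr_mem_Sset hU hr1 hrk hgap, fun i hi => ?_⟩
    rw [Finset.mem_Icc] at hi
    have := elt_Sr_s8 hU hr1 hrk hgap hi.1 hi.2
    rw [this]
    by_cases hir : i = r
    · rw [if_pos hir]
      have := hle i (Finset.mem_Icc.mpr hi)
      rw [hir] at this ⊢
      omega
    · rw [if_neg hir]
      exact hle i (Finset.mem_Icc.mpr hi)

lemma forward {n k : ℕ} {T : Finset ℕ} :
    ∀ S : Finset ℕ, S ∈ Sset n k → AdmLE n k S T →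
      ∀ i ∈ Finset.Icc 1 k,
        elt T i = elt S i ∨
        (elt T i = elt S i + 1 ∧ i ∈ OutS n k S ∧ i ∈ InS k T) := by
  intro S hS h
  induction h using Relation.ReflTransGen.head_induction_on with
  | refl => exact fun i _ => Or.inl rfl
  | head hstep hUT ih =>
    rename_i S' U
    obtain ⟨r, hr1, hrk, hgap', hodd, rfl⟩ := hstep
    have hpar : ¬ (elt S' r % 2 = k % 2) := odd_sub_iff.mp hodd
    have hgap : elt S' r + 1 < nxt n S' r := by omega
    have hcS : S'.card = k := (mem_Sset hS).2
    have hU : Sr S' r ∈ Sset n k := Sr_mem_Sset hS hr1 hrk hgap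
    have hcU : (Sr S' r).card = k := (mem_Sset hU).2
    have condU := ih hU
    have hut := (admLE_props hU hUT).2
    have heltU : ∀ i, 1 ≤ i → i ≤ k →
        elt (Sr S' r) i = if i = r then elt S' r + 1 else elt S' i :=
      fun i h1 h2 => elt_Sr_s8 hS hr1 hrk hgap h1 h2
    intro i hi
    have hi' := Finset.mem_Icc.mp hi
    by_cases hir : i = r
    · subst hir
      -- t_i = s_i + 1 case
      have hur : elt (Sr S' i) i = elt S' i + 1 := by rw [heltU i hi'.1 hi'.2, if_pos rfl]
      have htr : elt T i = elt S' i + 1 := by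
        rcases condU i hi with h | ⟨h, hout, _⟩
        · rw [h, hur]
        · exfalso
          rw [mem_OutS, hur] at hout
          omega
      right
      refine ⟨htr, mem_OutS.mpr ⟨hi', hpar, hgap⟩, mem_InS.mpr ⟨hi', by omega, ?_⟩⟩
      -- prv T i + 1 < elt T i
      rw [htr, prv]
      by_cases hi1 : i = 1
      · rw [if_pos hi1]
        have := (elt_range hS hi'.1 hi'.2).1
        omega
      · rw [if_neg hi1]
        -- elt T (i-1) + 1 < elt S' i + 1, i.e. elt T (i-1) < elt S' i
        have him : i - 1 ∈ Finset.Icc 1 k := Finset.mem_Icc.mpr ⟨by omega, by omega⟩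
        have hsmono : elt S' (i-1) < elt S' i := elt_strictMono hcS (by omega) (by omega) hi'.2
        rcases condU (i-1) him with h | ⟨h, hout, _⟩
        · rw [h, heltU (i-1) (by omega) (by omega), if_neg (by omega)]
          omega
        · rw [heltU (i-1) (by omega) (by omega), if_neg (by omega)] at h
          rw [mem_OutS] at hout
          obtain ⟨_, hpar', hgap''⟩ := hout
          rw [heltU (i-1) (by omega) (by omega), if_neg (by omega)] at hpar'
          rw [nxt_eq hcU, if_neg (by omega : ¬ i - 1 = k),
            heltU (i-1) (by omega) (by omega), if_neg (by omega),
            (by omega : i - 1 + 1 = i), heltU i hi'.1 hi'.2, if_pos rfl] at hgap''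
          -- hgap'' : elt S' (i-1) + 1 < elt S' i + 1; parity forces strict
          have hne : elt S' (i-1) + 1 ≠ elt S' i := by
            intro hc
            omega
          omega
    · -- i ≠ r
      have hui : elt (Sr S' r) i = elt S' i := by rw [heltU i hi'.1 hi'.2, if_neg hir]
      rcases condU i hi with h | ⟨h, hout, hin⟩
      · left; rw [h, hui]
      · right
        rw [hui] at h
        refine ⟨h, ?_, hin⟩
        rw [mem_OutS] at hout ⊢
        obtain ⟨_, hpar', hgap''⟩ := hout
        rw [hui] at hpar' hgap''
        refine ⟨hi', hpar', ?_⟩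
        rw [nxt_eq hcU] at hgap''
        rw [nxt_eq hcS]
        by_cases hik : i = k
        · rwa [if_pos hik] at hgap'' ⊢
        · rw [if_neg hik] at hgap'' ⊢
          rw [heltU (i+1) (by omega) (by omega)] at hgap''
          by_cases hir' : i + 1 = r
          · rw [if_pos hir'] at hgap''
            -- elt S' i + 1 < elt S' r + 1; parity forces elt S' i + 1 < elt S' r
            have hne : elt S' i + 1 ≠ elt S' r := by
              intro hc
              omega
            rw [hir']
            omega
          · rwa [if_neg hir'] at hgap''

lemma backward {n k : ℕ} {T : Finset ℕ} (hT : T ∈ Sset n k) :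
    ∀ N : ℕ, ∀ S : Finset ℕ, S ∈ Sset n k →
      (∀ i ∈ Finset.Icc 1 k,
        elt T i = elt S i ∨
        (elt T i = elt S i + 1 ∧ i ∈ OutS n k S ∧ i ∈ InS k T)) →
      ((Finset.Icc 1 k).filter (fun i => elt S i ≠ elt T i)).card ≤ N →
      AdmLE n k S T := by
  intro N
  induction N with
  | zero =>
    intro S hS hcond hcard
    have hempty : (Finset.Icc 1 k).filter (fun i => elt S i ≠ elt T i) = ∅ :=
      Finset.card_eq_zero.mp (by omega)
    have heq : S = T := by
      refine eq_of_elt_eq hS hT fun i hi => ?_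
      by_contra hc
      have : i ∈ (Finset.Icc 1 k).filter (fun i => elt S i ≠ elt T i) :=
        Finset.mem_filter.mpr ⟨hi, hc⟩
      rw [hempty] at this
      exact absurd this (Finset.notMem_empty i)
    rw [heq]
    exact Relation.ReflTransGen.refl
  | succ N ih =>
    intro S hS hcond hcard
    set B := (Finset.Icc 1 k).filter (fun i => elt S i ≠ elt T i) with hB
    by_cases hBe : B = ∅
    · have heq : S = T := by
        refine eq_of_elt_eq hS hT fun i hi => ?_
        by_contra hc
        have : i ∈ B := Finset.mem_filter.mpr ⟨hi, hc⟩
        rw [hBe] at this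
        exact absurd this (Finset.notMem_empty i)
      rw [heq]
      exact Relation.ReflTransGen.refl
    · have hBne : B.Nonempty := Finset.nonempty_iff_ne_empty.mpr hBe
      set r := B.max' hBne with hr
      have hrB : r ∈ B := B.max'_mem hBne
      have hrIcc : r ∈ Finset.Icc 1 k := (Finset.mem_filter.mp hrB).1
      have hrne : elt S r ≠ elt T r := (Finset.mem_filter.mp hrB).2
      have hr' := Finset.mem_Icc.mp hrIcc
      have hcS : S.card = k := (mem_Sset hS).2
      obtain ⟨htr, hout, hin⟩ : elt T r = elt S r + 1 ∧ r ∈ OutS n k S ∧ r ∈ InS k T := by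
        rcases hcond r hrIcc with h | h
        · exact absurd h.symm hrne
        · exact h
      rw [mem_OutS] at hout
      obtain ⟨_, hpar, hgap⟩ := hout
      have hstep : AdmStep n k S (Sr S r) :=
        ⟨r, hr'.1, hr'.2, by omega, odd_sub_iff.mpr hpar, rfl⟩
      have hU : Sr S r ∈ Sset n k := Sr_mem_Sset hS hr'.1 hr'.2 hgap
      have hcU : (Sr S r).card = k := (mem_Sset hU).2
      have heltU : ∀ i, 1 ≤ i → i ≤ k →
          elt (Sr S r) i = if i = r then elt S r + 1 else elt S i :=
        fun i h1 h2 => elt_Sr_s8 hS hr'.1 hr'.2 hgap h1 h2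
      refine Relation.ReflTransGen.head hstep (ih (Sr S r) hU ?_ ?_)
      · -- condition for (Sr S r, T)
        intro i hi
        have hi' := Finset.mem_Icc.mp hi
        by_cases hirr : i = r
        · left
          rw [hirr, heltU r hr'.1 hr'.2, if_pos rfl, htr]
        · rcases hcond i hi with h | ⟨h, hout2, hin2⟩
          · left; rw [h, heltU i hi'.1 hi'.2, if_neg hirr]
          · right
            have hiltr : i < r := by
              have hiB : i ∈ B := Finset.mem_filter.mpr ⟨hi, by omega⟩
              have := B.le_max' i hiB
              omega
            rw [heltU i hi'.1 hi'.2, if_neg hirr]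
            refine ⟨h, ?_, hin2⟩
            rw [mem_OutS] at hout2 ⊢
            obtain ⟨_, hpar2, hgap2⟩ := hout2
            refine ⟨hi', by rw [heltU i hi'.1 hi'.2, if_neg hirr]; exact hpar2, ?_⟩
            rw [heltU i hi'.1 hi'.2, if_neg hirr, nxt_eq hcU, if_neg (by omega : ¬ i = k),
              heltU (i+1) (by omega) (by omega)]
            rw [nxt_eq hcS, if_neg (by omega : ¬ i = k)] at hgap2
            by_cases hir' : i + 1 = r
            · rw [if_pos hir', ← hir']
              omega
            · rw [if_neg hir']
              exact hgap2
      · -- card bound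
        have hBU : (Finset.Icc 1 k).filter (fun i => elt (Sr S r) i ≠ elt T i) = B.erase r := by
          ext i
          rw [Finset.mem_filter, Finset.mem_erase, hB, Finset.mem_filter]
          constructor
          · rintro ⟨hi, hne⟩
            have hi' := Finset.mem_Icc.mp hi
            by_cases hirr : i = r
            · exfalso
              rw [hirr, heltU r hr'.1 hr'.2, if_pos rfl, ← htr] at hne
              exact hne rfl
            · rw [heltU i hi'.1 hi'.2, if_neg hirr] at hne
              exact ⟨hirr, hi, hne⟩
          · rintro ⟨hirr, hi, hne⟩
            have hi' := Finset.mem_Icc.mp hi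
            rw [heltU i hi'.1 hi'.2, if_neg hirr]
            exact ⟨hi, hne⟩
        rw [hBU, Finset.card_erase_of_mem hrB]
        omega

theorem stmt8 (n k : ℕ) (hk : k ≤ n) (S T : Finset ℕ)
    (hS : S ∈ Sset n k) (hT : T ∈ Sset n k)
    (hle : ∀ i ∈ Finset.Icc 1 k, elt S i ≤ elt T i) :
    AdmLE n k S T ↔
      ∀ i ∈ Finset.Icc 1 k,
        elt T i = elt S i ∨
        (elt T i = elt S i + 1 ∧ i ∈ OutS n k S ∧ i ∈ InS k T) := by
  constructor
  · exact fun h => forward S hS h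
  · intro h
    exact backward hT _ S hS h le_rfl
end
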